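/- arXiv:2303.04886 — 2 statements merged into one kernel-verified Lean document; each statement's English description precedes it below -/
import Mathlib

section
/- The set of all ratios o(G)/o(H), where G ranges over all finite abelian groups and H ranges over all subgroups of G, is dense in the interval [1, ∞). That is, for every real number a ≥ 1 and every ε > 0, there exist a finite abelian group G and a subgroup H of G such that |o(G)/o(H) - a| < ε. -/
open Filter Topology

noncomputable def avgOrder (G : Type*) [Group G] : ℝ :=
  (∑ᶠ x : G, (orderOf x : ℝ)) / (Nat.card G)

/-! For a finite group `K`, the subgroup `K × 1` of `K × K` realises the ratio
`o(K × K) / o(K)`. The average order is multiplicative on direct products of groups of coprime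
orders, so for `K = ∏_{p ∈ F} C_p` this ratio is `∏_{p ∈ F} r(p)`, where
`r(p) = o(C_p²) / o(C_p) = (p³ - p + 1) / (p³ - p² + p)` lies in `[1 + 1/(4p), 1 + 1/p]`.
As `∑ 1/p` diverges, the partial products of `r(p)` over the primes `p ≥ N` are unbounded and
grow by factors at most `1 + 1/N`, so one of them lies within `a/N` of `a`. -/

open Finset

section AvgOrder

variable {G K : Type*} [Group G] [Group K]

lemma avgOrder_congr (e : G ≃* K) : avgOrder G = avgOrder K := by
  rw [avgOrder, avgOrder, Nat.card_congr e.toEquiv, ← finsum_comp_equiv e.toEquiv]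
  simp only [MulEquiv.toEquiv_eq_coe, EquivLike.coe_coe, MulEquiv.orderOf_eq]

lemma avgOrder_prod_of_coprime [Finite G] [Finite K] (h : (Nat.card G).Coprime (Nat.card K)) :
    avgOrder (G × K) = avgOrder G * avgOrder K := by
  have : Fintype G := .ofFinite G
  have : Fintype K := .ofFinite K
  have horder (x : G) (y : K) : orderOf (x, y) = orderOf x * orderOf y := by
    rw [Prod.orderOf_mk]
    exact Nat.Coprime.lcm_eq_mul <|
      (h.coprime_dvd_left (orderOf_dvd_natCard x)).coprime_dvd_right (orderOf_dvd_natCard y)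
  simp only [avgOrder, finsum_eq_sum_of_fintype, Fintype.sum_prod_type, horder, Nat.card_prod,
    Nat.cast_mul]
  rw [div_mul_div_comm, sum_mul_sum]

lemma avgOrder_of_pow_prime_eq_one [Finite G] {p : ℕ} (hp : p.Prime) (h : ∀ x : G, x ^ p = 1) :
    avgOrder G = ((Nat.card G - 1) * p + 1) / Nat.card G := by
  have : Fact p.Prime := ⟨hp⟩
  have : Fintype G := .ofFinite G
  classical
  have hsum : ∑ x : G, (orderOf x : ℝ) = (Nat.card G - 1) * p + 1 := by
    rw [← add_sum_erase _ _ (mem_univ 1), orderOf_one,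
      sum_congr rfl fun x hx => by rw [orderOf_eq_prime (h x) (ne_of_mem_erase hx)],
      sum_const, card_erase_of_mem (mem_univ 1), card_univ, Nat.card_eq_fintype_card,
      nsmul_eq_mul, Nat.cast_sub Fintype.card_pos]
    push_cast
    ring
  rw [avgOrder, finsum_eq_sum_of_fintype, hsum]

noncomputable def avgOrderSqRatio (K : Type*) [Group K] : ℝ := avgOrder (K × K) / avgOrder K

lemma avgOrderSqRatio_prod_of_coprime [Finite G] [Finite K]
    (h : (Nat.card G).Coprime (Nat.card K)) :
    avgOrderSqRatio (G × K) = avgOrderSqRatio G * avgOrderSqRatio K := by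
  have hsq : (Nat.card (G × G)).Coprime (Nat.card (K × K)) := by
    simpa only [Nat.card_prod] using Nat.Coprime.mul_left (h.mul_right h) (h.mul_right h)
  rw [avgOrderSqRatio, avgOrder_congr (MulEquiv.prodProdProdComm G K G K),
    avgOrder_prod_of_coprime hsq, avgOrder_prod_of_coprime h, mul_div_mul_comm,
    avgOrderSqRatio, avgOrderSqRatio]

lemma exists_avgOrder_div_eq_avgOrderSqRatio (K : Type) [CommGroup K] [Finite K] :
    ∃ (G : Type) (_ : CommGroup G), Finite G ∧
      ∃ H : Subgroup G, avgOrder G / avgOrder H = avgOrderSqRatio K := by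
  refine ⟨K × K, inferInstance, inferInstance, (MonoidHom.inl K K).range, ?_⟩
  rw [avgOrderSqRatio, ← avgOrder_congr (MonoidHom.ofInjective (f := MonoidHom.inl K K)
    fun _ _ hxy => congrArg Prod.fst hxy)]

end AvgOrder

lemma Nat.card_multiplicative_zmod (n : ℕ) : Nat.card (Multiplicative (ZMod n)) = n :=
  (Nat.card_congr Multiplicative.toAdd).trans (Nat.card_zmod n)

lemma avgOrderSqRatio_zmod {p : ℕ} (hp : p.Prime) :
    avgOrderSqRatio (Multiplicative (ZMod p)) = ((p : ℝ) ^ 3 - p + 1) / (p ^ 3 - p ^ 2 + p) := by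
  have : NeZero p := ⟨hp.ne_zero⟩
  have hpow (x : Multiplicative (ZMod p)) : x ^ p = 1 := by
    rw [← toAdd_eq_zero, toAdd_pow, nsmul_eq_mul, ZMod.natCast_self, zero_mul]
  have hp0 : (p : ℝ) ≠ 0 := by exact_mod_cast hp.ne_zero
  rw [avgOrderSqRatio, avgOrder_of_pow_prime_eq_one hp fun x => Prod.ext (hpow x.1) (hpow x.2),
    avgOrder_of_pow_prime_eq_one hp hpow, Nat.card_prod, Nat.card_multiplicative_zmod]
  have : (p : ℝ) ^ 2 - p + 1 ≠ 0 := by nlinarith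
  push_cast
  field_simp

lemma one_add_inv_four_mul_le_avgOrderSqRatio_zmod {p : ℕ} (hp : p.Prime) :
    1 + 1 / (4 * p) ≤ avgOrderSqRatio (Multiplicative (ZMod p)) := by
  have hp2 : (2 : ℝ) ≤ p := by exact_mod_cast hp.two_le
  rw [avgOrderSqRatio_zmod hp, one_add_div (by positivity),
    div_le_div_iff₀ (by positivity) (by nlinarith)]
  nlinarith [mul_nonneg (by linarith : (0 : ℝ) ≤ p) (sq_nonneg ((p : ℝ) - 2))]

lemma avgOrderSqRatio_zmod_le {p : ℕ} (hp : p.Prime) :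
    avgOrderSqRatio (Multiplicative (ZMod p)) ≤ 1 + 1 / p := by
  have hp2 : (2 : ℝ) ≤ p := by exact_mod_cast hp.two_le
  rw [avgOrderSqRatio_zmod hp, one_add_div (by positivity),
    div_le_div_iff₀ (by nlinarith) (by positivity)]
  nlinarith

lemma exists_avgOrderSqRatio_eq_prod_primes (F : Finset ℕ) (hF : ∀ p ∈ F, p.Prime) :
    ∃ (K : Type) (_ : CommGroup K), Finite K ∧ Nat.card K = ∏ p ∈ F, p ∧
      avgOrderSqRatio K = ∏ p ∈ F, avgOrderSqRatio (Multiplicative (ZMod p)) := by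
  induction F using Finset.induction_on with
  | empty =>
    refine ⟨Unit, inferInstance, inferInstance, by simp, ?_⟩
    simp [avgOrderSqRatio, avgOrder, Subsingleton.orderOf_eq, finsum_eq_sum_of_fintype]
  | @insert p F hpF ih =>
    have hp : p.Prime := hF p (mem_insert_self p F)
    have : NeZero p := ⟨hp.ne_zero⟩
    obtain ⟨K, _, _, hcard, hK⟩ := ih fun q hq => hF q (mem_insert_of_mem hq)
    have hcop : (Nat.card K).Coprime (Nat.card (Multiplicative (ZMod p))) := by
      rw [hcard, Nat.card_multiplicative_zmod]
      exact Nat.Coprime.prod_left fun q hq =>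
        (Nat.coprime_primes (hF q (mem_insert_of_mem hq)) hp).mpr fun hqp => hpF (hqp ▸ hq)
    refine ⟨K × Multiplicative (ZMod p), inferInstance, inferInstance, ?_, ?_⟩
    · rw [Nat.card_prod, hcard, Nat.card_multiplicative_zmod, prod_insert hpF, mul_comm]
    · rw [avgOrderSqRatio_prod_of_coprime hcop, hK, prod_insert hpF, mul_comm]

lemma one_add_sum_sub_one_le_prod {ι : Type*} (s : Finset ι) {g : ι → ℝ}
    (hg : ∀ i ∈ s, 1 ≤ g i) :
    1 + ∑ i ∈ s, (g i - 1) ≤ ∏ i ∈ s, g i := by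
  classical
  induction s using Finset.induction_on with
  | empty => simp
  | @insert j s hjs ih =>
    have hj : 1 ≤ g j := hg j (mem_insert_self j s)
    have hs := ih fun i hi => hg i (mem_insert_of_mem hi)
    have hprod : 1 ≤ ∏ i ∈ s, g i := one_le_prod fun i hi => hg i (mem_insert_of_mem hi)
    rw [sum_insert hjs, prod_insert hjs]
    nlinarith [mul_nonneg (sub_nonneg.mpr hj) (sub_nonneg.mpr hprod)]

lemma tendsto_prod_range_atTop_of_not_summable {g : ℕ → ℝ} (hg : ∀ i, 1 ≤ g i)
    (h : ¬ Summable fun i => g i - 1) : Tendsto (fun n => ∏ i ∈ range n, g i) atTop atTop := by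
  refine tendsto_atTop_mono (fun n => ?_)
    ((not_summable_iff_tendsto_nat_atTop_of_nonneg fun i => sub_nonneg.mpr (hg i)).mp h)
  linarith [one_add_sum_sub_one_le_prod (range n) fun i _ => hg i]

lemma exists_abs_prod_range_sub_lt {g : ℕ → ℝ} {a δ : ℝ} (hg : ∀ i, 1 ≤ g i)
    (hgδ : ∀ i, g i ≤ 1 + δ) (ha : 1 ≤ a) (hunb : ∃ n, a < ∏ i ∈ range n, g i) :
    ∃ n, |∏ i ∈ range n, g i - a| < a * δ := by
  classical
  have hprod_one_le (n : ℕ) : 1 ≤ ∏ i ∈ range n, g i := one_le_prod fun i _ => hg i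
  obtain ⟨n, hn⟩ : ∃ n, Nat.find hunb = n + 1 :=
    Nat.exists_eq_succ_of_ne_zero fun h0 => by
      have h := Nat.find_spec hunb
      rw [h0, prod_range_zero] at h
      linarith
  have hle : ∏ i ∈ range n, g i ≤ a := not_lt.mp (Nat.find_min hunb (by omega))
  have hlt : a < (∏ i ∈ range n, g i) * (1 + δ) := by
    have h := Nat.find_spec hunb
    rw [hn, prod_range_succ] at h
    nlinarith [hgδ n, hprod_one_le n]
  refine ⟨n, abs_sub_lt_iff.mpr ⟨?_, ?_⟩⟩ <;> nlinarith [hprod_one_le n]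

noncomputable def sqRatioFrom (N i : ℕ) : ℝ :=
  if i.Prime ∧ N ≤ i then avgOrderSqRatio (Multiplicative (ZMod i)) else 1

lemma one_le_sqRatioFrom (N i : ℕ) : 1 ≤ sqRatioFrom N i := by
  unfold sqRatioFrom
  split_ifs with h
  · linarith [one_add_inv_four_mul_le_avgOrderSqRatio_zmod h.1,
      (by positivity : (0 : ℝ) ≤ 1 / (4 * i))]
  · rfl

lemma sqRatioFrom_le {N : ℕ} (hN : 0 < N) (i : ℕ) : sqRatioFrom N i ≤ 1 + 1 / N := by
  unfold sqRatioFrom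
  split_ifs with h
  · have : (1 : ℝ) / i ≤ 1 / N := one_div_le_one_div_of_le (by exact_mod_cast hN)
      (by exact_mod_cast h.2)
    linarith [avgOrderSqRatio_zmod_le h.1]
  · simp

lemma not_summable_sqRatioFrom_sub_one (N : ℕ) : ¬ Summable fun i => sqRatioFrom N i - 1 := by
  intro h
  apply not_summable_one_div_on_primes
  refine (h.mul_left 4).of_norm_bounded_eventually_nat ?_
  filter_upwards [eventually_ge_atTop N] with i hi
  by_cases hp : i.Prime
  · have h4 := one_add_inv_four_mul_le_avgOrderSqRatio_zmod hp
    rw [mul_comm 4, ← div_div] at h4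
    rw [Set.indicator_of_mem (show i ∈ {p | p.Prime} from hp), sqRatioFrom, if_pos ⟨hp, hi⟩,
      Real.norm_of_nonneg (by positivity)]
    linarith
  · rw [Set.indicator_of_notMem (show i ∉ {p | p.Prime} from hp), norm_zero]
    linarith [one_le_sqRatioFrom N i]

/-- The set of ratios `o(G)/o(H)`, with `G` finite abelian and `H ≤ G`,
is dense in `[1, ∞)`. -/
theorem avgOrder_ratio_abelian_dense :
    ∀ a : ℝ, 1 ≤ a → ∀ ε : ℝ, 0 < ε →
      ∃ (G : Type) (_ : CommGroup G), Finite G ∧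
        ∃ H : Subgroup G, |avgOrder G / avgOrder H - a| < ε := by
  intro a ha ε hε
  obtain ⟨N, hN⟩ := exists_nat_gt (a / ε)
  have hN0 : (0 : ℝ) < N := (div_pos (by linarith) hε).trans hN
  obtain ⟨n, hn⟩ := exists_abs_prod_range_sub_lt (one_le_sqRatioFrom N)
    (sqRatioFrom_le (by exact_mod_cast hN0)) ha
    ((tendsto_prod_range_atTop_of_not_summable (one_le_sqRatioFrom N)
      (not_summable_sqRatioFrom_sub_one N)).eventually_gt_atTop a).exists
  obtain ⟨K, _, _, -, hK⟩ := exists_avgOrderSqRatio_eq_prod_primes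
    ((range n).filter fun i => i.Prime ∧ N ≤ i) fun p hp => (mem_filter.mp hp).2.1
  obtain ⟨G, _, hG, H, hGH⟩ := exists_avgOrder_div_eq_avgOrderSqRatio K
  refine ⟨G, _, hG, H, ?_⟩
  rw [hGH, hK, prod_filter]
  calc _ < a * (1 / N) := hn
    _ < ε := by rwa [mul_one_div, div_lt_iff₀ hN0, ← div_lt_iff₀' hε]
end

section
/- For every ε > 0, there exist a finite nilpotent group G and a subgroup H of G such that o(G)/o(H) < ε. In other words, 0 is an adherent point of the set of ratios o(G)/o(H) with G finite nilpotent and H a subgroup of G. -/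
open Filter Topology

/-!
Let `R = (ℤ/2ⁿ)[x]/(x^(2^k) + 1)`, in which `x` is a unit of order `2^(k+1)` with
`x^(2^k) = -1`, and let `G = R ⋊ ⟨x⟩`, a 2-group. Every nontrivial element of the cyclic group
`⟨x⟩` has a power equal to its unique involution `-1`, which acts on `R` by negation; so if
`(b, c) ∈ G` with `c ≠ 1` and `c^m = -1`, then `(b, c)^(2m) = 1`. Hence all elements outside `R`
have order at most `2^(k+1)`, and `o(G) ≤ 2^(k+1) + 2ⁿ / 2^(k+1)`. On the other hand the cyclic
subgroup generated by `1 ∈ R` has order `2ⁿ`, so its average order is at least `φ(2ⁿ) = 2ⁿ⁻¹`.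
Taking `n = 2k + 2` makes the ratio at most `2^(1-k)`.
-/

section AvgOrder

variable {G : Type*} [Group G]

lemma avgOrder_eq_sum [Fintype G] :
    avgOrder G = (∑ x : G, (orderOf x : ℝ)) / Fintype.card G := by
  rw [avgOrder, finsum_eq_sum_of_fintype, Nat.card_eq_fintype_card]

variable [Finite G]

lemma avgOrder_le_add_div_index (N : Subgroup G) {a b : ℕ} (hN : ∀ x ∈ N, orderOf x ≤ b)
    (hG : ∀ x ∉ N, orderOf x ≤ a) : avgOrder G ≤ a + b / N.index := by
  classical
  have := Fintype.ofFinite G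
  have hsum : ∑ x : G, (orderOf x : ℝ) ≤ ∑ x : G, (a + if x ∈ N then (b : ℝ) else 0) := by
    refine Finset.sum_le_sum fun x _ => ?_
    by_cases hx : x ∈ N
    · simpa [hx] using (Nat.cast_le.mpr (hN x hx)).trans (le_add_of_nonneg_left (Nat.cast_nonneg a))
    · simpa [hx] using hG x hx
  have hcard : (Nat.card N : ℝ) * N.index = Fintype.card G := by
    exact_mod_cast Nat.card_eq_fintype_card (α := G) ▸ N.card_mul_index
  have hindex : (N.index : ℝ) ≠ 0 := by exact_mod_cast N.index_ne_zero_of_finite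
  have hfilter : (Finset.univ.filter (· ∈ N)).card = Nat.card N := by
    rw [Nat.card_eq_fintype_card, Fintype.card_subtype]
  rw [avgOrder_eq_sum, div_le_iff₀ (by positivity)]
  refine hsum.trans_eq ?_
  rw [Finset.sum_add_distrib, ← Finset.sum_filter, Finset.sum_const, Finset.sum_const, hfilter,
    Finset.card_univ, nsmul_eq_mul, nsmul_eq_mul, ← hcard]
  field_simp

lemma totient_card_le_avgOrder [IsCyclic G] : ((Nat.card G).totient : ℝ) ≤ avgOrder G := by
  classical
  have := Fintype.ofFinite G
  have hcard : 0 < Fintype.card G := Fintype.card_pos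
  rw [avgOrder_eq_sum, le_div_iff₀ (by exact_mod_cast hcard), Nat.card_eq_fintype_card]
  calc ((Fintype.card G).totient : ℝ) * Fintype.card G
      = ∑ x ∈ Finset.univ.filter (fun x : G => orderOf x = Fintype.card G), (orderOf x : ℝ) := by
        rw [Finset.sum_congr rfl fun x hx => by rw [(Finset.mem_filter.mp hx).2], Finset.sum_const,
          IsCyclic.card_orderOf_eq_totient dvd_rfl, nsmul_eq_mul]
    _ ≤ ∑ x : G, (orderOf x : ℝ) :=
        Finset.sum_le_sum_of_subset_of_nonneg (Finset.filter_subset _ _) fun _ _ _ => by positivity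

end AvgOrder

namespace SemidirectProduct

variable {N G : Type*} [Group N] [Group G] {φ : G →* MulAut N}

lemma sq_eq_one_of_right {x : N ⋊[φ] G} (hinv : ∀ n, φ x.right n = n⁻¹) (hsq : x.right ^ 2 = 1) :
    x ^ 2 = 1 := by
  ext
  · simp [sq, hinv]
  · simpa [sq] using hsq

end SemidirectProduct

lemma exists_dvd_pow_eq_of_mem_zpowers {G : Type*} [Group G] {w g : G} {k : ℕ}
    (hw : orderOf w = 2 ^ (k + 1)) (hg : g ∈ Subgroup.zpowers w) (hg1 : g ≠ 1) :
    ∃ m, m ∣ 2 ^ k ∧ g ^ m = w ^ 2 ^ k := by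
  have hfin : IsOfFinOrder w := orderOf_pos_iff.mp (hw ▸ by positivity)
  obtain ⟨j, rfl⟩ := hfin.mem_powers_iff_mem_zpowers.mpr hg
  have hj : j ≠ 0 := by rintro rfl; exact hg1 (pow_zero w)
  obtain ⟨a, r, hr, rfl⟩ := Nat.exists_eq_two_pow_mul_odd hj
  have ha : a ≤ k := by
    by_contra! ha
    refine hg1 (orderOf_dvd_iff_pow_eq_one.mp ?_)
    rw [hw]
    exact (pow_dvd_pow 2 ha).mul_right r
  obtain ⟨s, rfl⟩ := hr
  refine ⟨2 ^ (k - a), pow_dvd_pow 2 (Nat.sub_le k a), ?_⟩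
  have hk : 2 ^ a * (2 * s + 1) * 2 ^ (k - a) = 2 ^ (k + 1) * s + 2 ^ k := by
    have h2k : 2 ^ a * 2 ^ (k - a) = 2 ^ k := by rw [← pow_add, Nat.add_sub_cancel' ha]
    rw [pow_succ]
    linear_combination (2 * s + 1) * h2k
  rw [← pow_mul, hk, pow_add, pow_mul, ← hw, pow_orderOf_eq_one, one_pow, one_mul]

open Polynomial Subgroup

def unitsMulAction (R : Type*) [Ring R] (C : Subgroup Rˣ) : C →* MulAut (Multiplicative R) :=
  (MulAutMultiplicative R).symm.toMonoidHom.comp (AddAut.mulLeft.comp C.subtype)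

@[simp]
lemma unitsMulAction_apply {R : Type*} [Ring R] {C : Subgroup Rˣ} (c : C) (r : Multiplicative R) :
    unitsMulAction R C c r = .ofAdd (((c : Rˣ) : R) * r.toAdd) :=
  rfl

abbrev AffineGroup (R : Type*) [Ring R] (C : Subgroup Rˣ) : Type _ :=
  Multiplicative R ⋊[unitsMulAction R C] C

namespace AffineGroup

variable {R : Type*} [Ring R]

lemma orderOf_dvd_of_right_eq_one {C : Subgroup Rˣ} (p : ℕ) [CharP R p] {x : AffineGroup R C}
    (hx : x.right = 1) : orderOf x ∣ p := by
  rw [← SemidirectProduct.inl_left_mul_inr_right x, hx, map_one, mul_one,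
    orderOf_injective _ SemidirectProduct.inl_injective, ← ofAdd_toAdd x.left,
    orderOf_ofAdd_eq_addOrderOf, addOrderOf_dvd_iff_nsmul_eq_zero, nsmul_eq_mul,
    CharP.cast_eq_zero, zero_mul]

lemma orderOf_dvd_of_right_ne_one {w : Rˣ} {k : ℕ} (hw : orderOf w = 2 ^ (k + 1))
    (hneg : w ^ 2 ^ k = -1) {x : AffineGroup R (zpowers w)} (hx : x.right ≠ 1) :
    orderOf x ∣ 2 ^ (k + 1) := by
  obtain ⟨m, hm, hxm⟩ := exists_dvd_pow_eq_of_mem_zpowers hw x.right.2 (by simpa using hx)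
  have hright : ((x ^ m).right : Rˣ) = -1 := by
    rw [← hneg, ← hxm, ← SemidirectProduct.rightHom_eq_right, map_pow, Subgroup.coe_pow]
  have hsq : (x ^ m) ^ 2 = 1 := SemidirectProduct.sq_eq_one_of_right
    (fun n => by simp [hright]) (by ext; simp [hright])
  refine (orderOf_dvd_of_pow_eq_one (by rwa [← pow_mul] at hsq)).trans ?_
  rw [pow_succ]
  exact mul_dvd_mul_right hm 2

instance [Finite R] (C : Subgroup Rˣ) : Finite (AffineGroup R C) :=
  Finite.of_equiv _ SemidirectProduct.equivProd.symm

lemma index_ker_rightHom (C : Subgroup Rˣ) :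
    (SemidirectProduct.rightHom : AffineGroup R C →* C).ker.index = Nat.card C := by
  rw [index_ker, MonoidHom.range_eq_top.mpr SemidirectProduct.rightHom_surjective, card_top]

lemma avgOrder_le [Finite R] (p : ℕ) [CharP R p] {w : Rˣ} {k : ℕ} (hw : orderOf w = 2 ^ (k + 1))
    (hneg : w ^ 2 ^ k = -1) :
    avgOrder (AffineGroup R (zpowers w)) ≤ 2 ^ (k + 1) + p / 2 ^ (k + 1) := by
  have h := avgOrder_le_add_div_index (SemidirectProduct.rightHom.ker) (a := 2 ^ (k + 1)) (b := p)
    (fun x hx => Nat.le_of_dvd (Nat.pos_of_ne_zero (CharP.char_ne_zero_of_finite R p))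
      (orderOf_dvd_of_right_eq_one p hx))
    (fun x hx => Nat.le_of_dvd (by positivity) (orderOf_dvd_of_right_ne_one hw hneg hx))
  simpa [index_ker_rightHom, Nat.card_zpowers, hw] using h

lemma isPGroup {n : ℕ} [CharP R (2 ^ n)] {w : Rˣ} {k : ℕ}
    (hw : orderOf w = 2 ^ (k + 1)) (hneg : w ^ 2 ^ k = -1) :
    IsPGroup 2 (AffineGroup R (zpowers w)) := by
  intro x
  by_cases hx : x.right = 1
  · exact ⟨n, orderOf_dvd_iff_pow_eq_one.mp (orderOf_dvd_of_right_eq_one _ hx)⟩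
  · exact ⟨k + 1, orderOf_dvd_iff_pow_eq_one.mp (orderOf_dvd_of_right_ne_one hw hneg hx)⟩

lemma orderOf_inl_one (p : ℕ) [CharP R p] (C : Subgroup Rˣ) :
    orderOf (SemidirectProduct.inl (.ofAdd 1) : AffineGroup R C) = p := by
  rw [orderOf_injective _ SemidirectProduct.inl_injective, orderOf_ofAdd_eq_addOrderOf]
  exact CharP.eq R (CharP.addOrderOf_one R) ‹_›

end AffineGroup

abbrev NegacyclicRing (n k : ℕ) : Type := AdjoinRoot (X ^ 2 ^ k + 1 : (ZMod (2 ^ n))[X])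

namespace NegacyclicRing

variable (n k : ℕ)

lemma monic_X_pow_add_one : (X ^ 2 ^ k + 1 : (ZMod (2 ^ n))[X]).Monic := by
  simpa using monic_X_pow_add_C (1 : ZMod (2 ^ n)) (pow_ne_zero k two_ne_zero)

instance : Finite (NegacyclicRing n k) :=
  have := (monic_X_pow_add_one n k).finite_adjoinRoot
  Module.finite_of_finite (ZMod (2 ^ n))

lemma charP (hn : n ≠ 0) : CharP (NegacyclicRing n k) (2 ^ n) := by
  have : Fact (1 < 2 ^ n) := ⟨Nat.one_lt_two_pow hn⟩
  have := (monic_X_pow_add_one n k).free_adjoinRoot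
  have : Nontrivial (NegacyclicRing n k) := nontrivial_of_ne _ _ <|
    AdjoinRoot.mk_ne_zero_of_natDegree_lt (monic_X_pow_add_one n k) one_ne_zero
      (by rw [← C_1, natDegree_X_pow_add_C, natDegree_C]; positivity)
  exact charP_of_injective_algebraMap' (ZMod (2 ^ n)) (2 ^ n)

lemma root_pow_eq_neg_one : AdjoinRoot.root (X ^ 2 ^ k + 1 : (ZMod (2 ^ n))[X]) ^ 2 ^ k = -1 := by
  have h := AdjoinRoot.eval₂_root (X ^ 2 ^ k + 1 : (ZMod (2 ^ n))[X])
  simp only [eval₂_add, eval₂_X_pow, eval₂_one] at h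
  linear_combination h

noncomputable def rootUnit : (NegacyclicRing n k)ˣ :=
  Units.ofPowEqOne _ (2 ^ (k + 1)) (by rw [pow_succ, pow_mul, root_pow_eq_neg_one]; ring)
    (by positivity)

lemma rootUnit_pow_eq_neg_one : rootUnit n k ^ 2 ^ k = -1 :=
  Units.ext (by simp [rootUnit, root_pow_eq_neg_one])

lemma orderOf_rootUnit (hn : 2 ≤ n) : orderOf (rootUnit n k) = 2 ^ (k + 1) := by
  have := charP n k (by omega)
  have : Fact (2 < 2 ^ n) := ⟨(Nat.pow_lt_pow_right one_lt_two hn :)⟩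
  refine orderOf_eq_prime_pow ?_ ?_
  · rw [rootUnit_pow_eq_neg_one, Units.ext_iff]
    exact CharP.neg_one_ne_one (NegacyclicRing n k) (2 ^ n)
  · rw [pow_succ, pow_mul, rootUnit_pow_eq_neg_one]; simp

end NegacyclicRing

open NegacyclicRing in
/-- For every `ε > 0` there are a finite nilpotent group `G` and a subgroup `H`
of `G` with `o(G)/o(H) < ε`; i.e. `0` is an adherent point of the set of such
ratios. -/
theorem avgOrder_ratio_nilpotent_lt :
    ∀ ε : ℝ, 0 < ε →
      ∃ (G : Type) (_ : Group G), Finite G ∧ Group.IsNilpotent G ∧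
        ∃ H : Subgroup G, avgOrder G / avgOrder H < ε := by
  intro ε hε
  obtain ⟨k, hk⟩ := exists_pow_lt_of_lt_one (half_pos hε) (by norm_num : (1 / 2 : ℝ) < 1)
  have := charP (2 * k + 2) k (by omega)
  have hw := orderOf_rootUnit (2 * k + 2) k (by omega)
  have hneg := rootUnit_pow_eq_neg_one (2 * k + 2) k
  refine ⟨_, inferInstance, inferInstance, (AffineGroup.isPGroup hw hneg).isNilpotent,
    zpowers (SemidirectProduct.inl (.ofAdd 1)), ?_⟩
  have hG := (AffineGroup.avgOrder_le _ hw hneg).trans_eq (c := 2 ^ (k + 2)) <| by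
    push_cast
    field_simp
    ring
  have hH := totient_card_le_avgOrder (G := zpowers (SemidirectProduct.inl (.ofAdd 1) :
    AffineGroup (NegacyclicRing (2 * k + 2) k) (zpowers (rootUnit (2 * k + 2) k))))
  rw [Nat.card_zpowers, AffineGroup.orderOf_inl_one (2 ^ (2 * k + 2)),
    Nat.totient_prime_pow_succ Nat.prime_two] at hH
  calc _ ≤ (2 : ℝ) ^ (k + 2) / 2 ^ (2 * k + 1) :=
        div_le_div₀ (by positivity) hG (by positivity) (by simpa using hH)
    _ = 2 * (1 / 2) ^ k := by
        rw [one_div_pow]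
        field_simp
        ring
    _ < ε := by linarith
end
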